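/- Let n ≥ 1, 1/2 ≤ α ≤ 1, and let θ : ℝ → ℝ^n satisfy |θ(t) − θ(t')| ≤ |t−t'|^α. Let X = ∪_k B_k be a union of lattice unit cubes in B_R^{n+1}(0) with centers (x_k, t_k), and let Y = ∪_l Q_l be the minimal union of lattice unit cubes containing ∪_k B₄^{n+1}(x_k + θ(t_k), t_k). Then for every 1 ≤ β ≤ n+1 there exists a constant c_n depending only on n such that φ_{Y,β} ≤ c_n φ_{X,β}, where in φ_{Y,β} the maximum is taken over all balls B_r^{n+1}(y₀,s₀) with r ≥ 1 (not necessarily contained in B_R^{n+1}(0)) and in φ_{X,β} over all balls B_r^{n+1} with r ≥ 1 containing the relevant cubes. -/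

import Mathlib

open MeasureTheory Metric RealInnerProductSpace
open scoped ENNReal NNReal

noncomputable def fourierT {n : ℕ} (f : EuclideanSpace ℝ (Fin n) → ℂ)
    (ξ : EuclideanSpace ℝ (Fin n)) : ℂ :=
  ∫ x : EuclideanSpace ℝ (Fin n),
    Complex.exp ((-(2 * Real.pi * ⟪x, ξ⟫) : ℝ) * Complex.I) * f x

noncomputable def extOp {n : ℕ} (g : EuclideanSpace ℝ (Fin n) → ℂ) (t : ℝ)
    (x : EuclideanSpace ℝ (Fin n)) : ℂ :=
  ∫ ξ : EuclideanSpace ℝ (Fin n),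
    Complex.exp (((2 * Real.pi * (⟪x, ξ⟫ + t * ‖ξ‖ ^ 2)) : ℝ) * Complex.I) * g ξ

noncomputable def schrod {n : ℕ} (f : EuclideanSpace ℝ (Fin n) → ℂ) (t : ℝ)
    (x : EuclideanSpace ℝ (Fin n)) : ℂ :=
  extOp (fourierT f) t x

noncomputable def sobolevNorm {n : ℕ} (s : ℝ) (f : EuclideanSpace ℝ (Fin n) → ℂ) : ℝ :=
  (∫ ξ : EuclideanSpace ℝ (Fin n), (1 + ‖ξ‖ ^ 2) ^ s * ‖fourierT f ξ‖ ^ 2) ^ (1/2 : ℝ)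

def ball2 {n : ℕ} (c : EuclideanSpace ℝ (Fin n) × ℝ) (r : ℝ) :
    Set (EuclideanSpace ℝ (Fin n) × ℝ) :=
  {p | Real.sqrt (‖p.1 - c.1‖ ^ 2 + (p.2 - c.2) ^ 2) < r}

def latticeCube {n : ℕ} (m : (Fin n → ℤ) × ℤ) : Set (EuclideanSpace ℝ (Fin n) × ℝ) :=
  {p | (∀ i, (m.1 i : ℝ) ≤ p.1 i ∧ p.1 i ≤ m.1 i + 1) ∧ ((m.2 : ℝ) ≤ p.2 ∧ p.2 ≤ m.2 + 1)}

noncomputable def cubeCenterX {n : ℕ} (m : (Fin n → ℤ) × ℤ) : EuclideanSpace ℝ (Fin n) :=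
  WithLp.toLp 2 (fun i => (m.1 i : ℝ) + 1/2)

noncomputable def cubeCenterT {n : ℕ} (m : (Fin n → ℤ) × ℤ) : ℝ := (m.2 : ℝ) + 1/2

noncomputable def latticeVec {n : ℕ} (m : Fin n → ℤ) : EuclideanSpace ℝ (Fin n) :=
  WithLp.toLp 2 (fun i => (m i : ℝ))


/-!
Every cube `Q` of `Y` inside `B_r(c)` meets a ball `B_4(x_k + θ(t_k), t_k)`, and then the cube
`B_k` lies in the ball of radius `(√n + 16) r` around `(c_x - θ(c_t), c_t)`: the Hölder bound
moves `θ(t_k)` by at most `|t_k - c_t| ^ α ≤ 5r`. Each `B_k` accounts for at most `9 ^ (n + 1)`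
cubes `Q`, so the count in `B_r(c)` is at most `9 ^ (n + 1) φ ((√n + 16) r) ^ β`.
-/

section Geometry

variable {n : ℕ}

lemma norm_fst_sub_lt_of_mem_ball2 {p c : EuclideanSpace ℝ (Fin n) × ℝ} {r : ℝ}
    (h : p ∈ ball2 c r) : ‖p.1 - c.1‖ < r :=
  (Real.le_sqrt (norm_nonneg _) (by positivity)).2 (by nlinarith) |>.trans_lt h

lemma abs_snd_sub_lt_of_mem_ball2 {p c : EuclideanSpace ℝ (Fin n) × ℝ} {r : ℝ}
    (h : p ∈ ball2 c r) : |p.2 - c.2| < r :=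
  (Real.abs_le_sqrt (by nlinarith [sq_nonneg ‖p.1 - c.1‖])).trans_lt h

lemma mem_ball2_of_add_lt {p c : EuclideanSpace ℝ (Fin n) × ℝ} {r : ℝ}
    (h : ‖p.1 - c.1‖ + |p.2 - c.2| < r) : p ∈ ball2 c r := by
  refine lt_of_le_of_lt (Real.sqrt_le_iff.2 ⟨by positivity, ?_⟩) h
  nlinarith [sq_abs (p.2 - c.2), norm_nonneg (p.1 - c.1), abs_nonneg (p.2 - c.2)]

lemma norm_le_sqrt_mul_of_forall_abs_le {x : EuclideanSpace ℝ (Fin n)} {a : ℝ}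
    (ha : 0 ≤ a) (h : ∀ i, |x i| ≤ a) : ‖x‖ ≤ √n * a := by
  calc ‖x‖ = √(∑ i, ‖x i‖ ^ 2) := EuclideanSpace.norm_eq x
    _ ≤ √(∑ _i : Fin n, a ^ 2) := by
      gcongr with i
      exact (Real.norm_eq_abs _).trans_le (h i)
    _ = √n * a := by
      rw [Finset.sum_const, Finset.card_univ, Fintype.card_fin, nsmul_eq_mul,
        Real.sqrt_mul (Nat.cast_nonneg n), Real.sqrt_sq ha]

lemma norm_sub_cubeCenterX_le {m : (Fin n → ℤ) × ℤ} {p : EuclideanSpace ℝ (Fin n) × ℝ}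
    (hp : p ∈ latticeCube m) : ‖p.1 - cubeCenterX m‖ ≤ √n / 2 := by
  rw [div_eq_mul_one_div]
  refine norm_le_sqrt_mul_of_forall_abs_le (by norm_num) fun i => abs_le.2 ?_
  have := hp.1 i
  simp only [PiLp.sub_apply, cubeCenterX]
  constructor <;> linarith

lemma abs_sub_cubeCenterT_le {m : (Fin n → ℤ) × ℤ} {p : EuclideanSpace ℝ (Fin n) × ℝ}
    (hp : p ∈ latticeCube m) : |p.2 - cubeCenterT m| ≤ 1 / 2 := by
  have := hp.2
  rw [cubeCenterT, abs_le]
  constructor <;> linarith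

end Geometry

section Counting

lemma mem_Icc_floor_of_abs_sub_lt {q : ℤ} {p z : ℝ} {k : ℕ} (hq : (q : ℝ) ≤ p ∧ p ≤ q + 1)
    (hp : |p - z| < k) : q ∈ Finset.Icc (⌊z⌋ - k) (⌊z⌋ + k) := by
  have hz := Int.floor_le z
  have hz' := Int.lt_floor_add_one z
  obtain ⟨hlo, hhi⟩ := abs_lt.1 hp
  have h1 : ((⌊z⌋ - k - 1 : ℤ) : ℝ) < q := by push_cast; linarith
  have h2 : (q : ℝ) < ((⌊z⌋ + k + 1 : ℤ) : ℝ) := by push_cast; linarith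
  rw [Finset.mem_Icc]
  exact ⟨by have := Int.cast_lt.1 h1; omega, by have := Int.cast_lt.1 h2; omega⟩

variable {n : ℕ}

noncomputable def cubesNear (z : EuclideanSpace ℝ (Fin n) × ℝ) (k : ℕ) : Finset ((Fin n → ℤ) × ℤ) :=
  Finset.Icc (fun i => ⌊z.1 i⌋ - k) (fun i => ⌊z.1 i⌋ + k) ×ˢ Finset.Icc (⌊z.2⌋ - k) (⌊z.2⌋ + k)

lemma card_cubesNear (z : EuclideanSpace ℝ (Fin n) × ℝ) (k : ℕ) :
    (cubesNear z k).card = (2 * k + 1) ^ (n + 1) := by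
  have hIcc : ∀ a : ℤ, (Finset.Icc (a - k) (a + k)).card = 2 * k + 1 := fun a => by
    rw [Int.card_Icc]; omega
  simp only [cubesNear, Finset.card_product, Pi.card_Icc, hIcc, Finset.prod_const,
    Finset.card_univ, Fintype.card_fin, pow_succ]

lemma mem_cubesNear {q : (Fin n → ℤ) × ℤ} {z : EuclideanSpace ℝ (Fin n) × ℝ} {k : ℕ}
    (h : (latticeCube q ∩ ball2 z k).Nonempty) : q ∈ cubesNear z k := by
  obtain ⟨p, hpq, hpz⟩ := h
  have hx : ∀ i, q.1 i ∈ Finset.Icc (⌊z.1 i⌋ - k) (⌊z.1 i⌋ + k) := fun i =>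
    mem_Icc_floor_of_abs_sub_lt (hpq.1 i)
      ((PiLp.norm_apply_le (p.1 - z.1) i).trans_lt (norm_fst_sub_lt_of_mem_ball2 hpz))
  have ht := mem_Icc_floor_of_abs_sub_lt hpq.2 (abs_snd_sub_lt_of_mem_ball2 hpz)
  simp only [Finset.mem_Icc] at hx
  exact Finset.mem_product.2 ⟨Finset.mem_Icc.2 ⟨fun i => (hx i).1, fun i => (hx i).2⟩, ht⟩

lemma ncard_le_of_subset_biUnion_cubesNear {ι : Type*} {Q : Set ((Fin n → ℤ) × ℤ)}
    {T : Set ι} (hT : T.Finite) (z : ι → EuclideanSpace ℝ (Fin n) × ℝ) (k : ℕ)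
    (h : Q ⊆ ⋃ i ∈ T, ↑(cubesNear (z i) k)) : Q.ncard ≤ T.ncard * (2 * k + 1) ^ (n + 1) := by
  classical
  have hQ : Q ⊆ ↑(hT.toFinset.biUnion fun i => cubesNear (z i) k) := by
    simpa only [Finset.coe_biUnion, Set.Finite.coe_toFinset] using h
  calc Q.ncard ≤ (hT.toFinset.biUnion fun i => cubesNear (z i) k).card := by
        simpa only [Set.ncard_coe_finset] using Set.ncard_le_ncard hQ (Finset.finite_toSet _)
    _ ≤ hT.toFinset.card * (2 * k + 1) ^ (n + 1) :=
        Finset.card_biUnion_le_card_mul _ _ _ fun i _ => (card_cubesNear _ _).le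
    _ = T.ncard * (2 * k + 1) ^ (n + 1) := by rw [Set.ncard_eq_toFinset_card T hT]

end Counting

section HolderShift

lemma rpow_le_of_le_of_one_le {x y α : ℝ} (hx : 0 ≤ x) (hxy : x ≤ y) (hy : 1 ≤ y)
    (hα0 : 0 ≤ α) (hα1 : α ≤ 1) : x ^ α ≤ y :=
  calc x ^ α ≤ y ^ α := Real.rpow_le_rpow hx hxy hα0
    _ ≤ y ^ (1 : ℝ) := Real.rpow_le_rpow_of_exponent_le hy hα1
    _ = y := Real.rpow_one y

variable {n : ℕ} {α : ℝ} {θ : ℝ → EuclideanSpace ℝ (Fin n)}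

lemma latticeCube_subset_ball2_of_meets (hθ : ∀ t t', ‖θ t - θ t'‖ ≤ |t - t'| ^ α)
    (hα0 : 0 ≤ α) (hα1 : α ≤ 1) {m q : (Fin n → ℤ) × ℤ} {c : EuclideanSpace ℝ (Fin n) × ℝ}
    {r : ℝ} (hr : 1 ≤ r)
    (hmeet : (latticeCube q ∩ ball2 (cubeCenterX m + θ (cubeCenterT m), cubeCenterT m) 4).Nonempty)
    (hq : latticeCube q ⊆ ball2 c r) :
    latticeCube m ⊆ ball2 (c.1 - θ c.2, c.2) ((√n + 16) * r) := by
  obtain ⟨p, hpq, hpm⟩ := hmeet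
  set x := cubeCenterX m
  set t := cubeCenterT m
  have hpx := norm_fst_sub_lt_of_mem_ball2 hpm
  have hpt := abs_snd_sub_lt_of_mem_ball2 hpm
  have hpcx := norm_fst_sub_lt_of_mem_ball2 (hq hpq)
  have hpct := abs_snd_sub_lt_of_mem_ball2 (hq hpq)
  dsimp only at hpx hpt
  have htc : |t - c.2| ≤ |p.2 - t| + |p.2 - c.2| := abs_sub_comm t p.2 ▸ abs_sub_le _ _ _
  have hθtc : ‖θ t - θ c.2‖ ≤ 5 * r :=
    (hθ _ _).trans (rpow_le_of_le_of_one_le (abs_nonneg _) (by linarith) (by linarith) hα0 hα1)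
  intro p' hp'
  have hp'x := norm_sub_cubeCenterX_le hp'
  have hp't := abs_sub_cubeCenterT_le hp'
  have hx : ‖p'.1 - (c.1 - θ c.2)‖ ≤
      ‖p'.1 - x‖ + ‖(x + θ t) - p.1‖ + ‖p.1 - c.1‖ + ‖θ c.2 - θ t‖ := by
    calc _ = ‖(p'.1 - x) + ((x + θ t) - p.1) + (p.1 - c.1) + (θ c.2 - θ t)‖ := by
          congr 1; abel
      _ ≤ _ := norm_add₄_le
  rw [norm_sub_rev (x + θ t), norm_sub_rev (θ c.2)] at hx
  have ht : |p'.2 - c.2| ≤ |p'.2 - t| + |t - p.2| + |p.2 - c.2| :=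
    (abs_sub_le _ p.2 _).trans (by gcongr; exact abs_sub_le _ _ _)
  rw [abs_sub_comm t] at ht
  apply mem_ball2_of_add_lt
  nlinarith [Real.sqrt_nonneg n]

end HolderShift

lemma mul_rpow_le_rpow_mul_rpow {K r β γ : ℝ} (hK : 1 ≤ K) (hr : 0 ≤ r) (hβγ : β ≤ γ) :
    (K * r) ^ β ≤ K ^ γ * r ^ β := by
  rw [Real.mul_rpow (by linarith) hr]
  gcongr

theorem statement8_general (n : ℕ) :
    ∃ c : ℝ, 0 < c ∧ ∀ α : ℝ, 1/2 ≤ α → α ≤ 1 →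
      ∀ θ : ℝ → EuclideanSpace ℝ (Fin n), (∀ t t' : ℝ, ‖θ t - θ t'‖ ≤ |t - t'| ^ α) →
      ∀ (R : ℝ) (S : Set ((Fin n → ℤ) × ℤ)), S.Finite →
        (∀ m ∈ S, latticeCube m ⊆ ball2 (0, 0) R) →
      ∀ β : ℝ, 1 ≤ β → β ≤ n + 1 →
      ∀ φ : ℝ, 0 ≤ φ →
        (∀ (c' : EuclideanSpace ℝ (Fin n) × ℝ) (r : ℝ), 1 ≤ r →
          ({m ∈ S | latticeCube m ⊆ ball2 c' r}.ncard : ℝ) ≤ φ * r ^ β) →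
        ∀ (c' : EuclideanSpace ℝ (Fin n) × ℝ) (r : ℝ), 1 ≤ r →
          ({q : (Fin n → ℤ) × ℤ |
              (latticeCube q ∩
                ⋃ m ∈ S, ball2 (cubeCenterX m + θ (cubeCenterT m), cubeCenterT m) 4).Nonempty ∧
              latticeCube q ⊆ ball2 c' r}.ncard : ℝ) ≤ c * φ * r ^ β := by
  refine ⟨9 ^ (n + 1) * (√n + 16) ^ ((n : ℝ) + 1), by positivity, ?_⟩
  intro α hα hα1 θ hθ _ S hS _ β _ hβ φ hφ hX c r hr
  set T := {m ∈ S | latticeCube m ⊆ ball2 (c.1 - θ c.2, c.2) ((√n + 16) * r)}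
  have hcover : {q : (Fin n → ℤ) × ℤ |
      (latticeCube q ∩
        ⋃ m ∈ S, ball2 (cubeCenterX m + θ (cubeCenterT m), cubeCenterT m) 4).Nonempty ∧
      latticeCube q ⊆ ball2 c r} ⊆
      ⋃ m ∈ T, ↑(cubesNear (cubeCenterX m + θ (cubeCenterT m), cubeCenterT m) 4) := by
    rintro q ⟨⟨p, hpq, hpY⟩, hq⟩
    obtain ⟨m, hmS, hpm⟩ := Set.mem_iUnion₂.1 hpY
    have hmeet : (latticeCube q ∩ ball2 _ 4).Nonempty := ⟨p, hpq, hpm⟩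
    refine Set.mem_biUnion ⟨hmS, latticeCube_subset_ball2_of_meets hθ (by linarith) hα1 hr hmeet hq⟩
      (mem_cubesNear (k := 4) (by exact_mod_cast hmeet))
  have hcount := ncard_le_of_subset_biUnion_cubesNear (hS.subset (Set.sep_subset _ _)) _ 4 hcover
  have hT := hX (c.1 - θ c.2, c.2) ((√n + 16) * r) (by nlinarith [Real.sqrt_nonneg n])
  calc _ ≤ (T.ncard : ℝ) * 9 ^ (n + 1) := by exact_mod_cast hcount
    _ ≤ φ * ((√n + 16) * r) ^ β * 9 ^ (n + 1) := by gcongr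
    _ ≤ φ * ((√n + 16) ^ ((n : ℝ) + 1) * r ^ β) * 9 ^ (n + 1) := by
      gcongr
      exact mul_rpow_le_rpow_mul_rpow (by linarith [Real.sqrt_nonneg n]) (by linarith) hβ
    _ = _ := by ring

theorem statement8 (n : ℕ) (hn : 1 ≤ n) :
    ∃ c : ℝ, 0 < c ∧ ∀ α : ℝ, 1/2 ≤ α → α ≤ 1 →
      ∀ θ : ℝ → EuclideanSpace ℝ (Fin n), (∀ t t' : ℝ, ‖θ t - θ t'‖ ≤ |t - t'| ^ α) →
      ∀ (R : ℝ) (S : Set ((Fin n → ℤ) × ℤ)), S.Finite →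
        (∀ m ∈ S, latticeCube m ⊆ ball2 (0, 0) R) →
      ∀ β : ℝ, 1 ≤ β → β ≤ n + 1 →
      ∀ φ : ℝ, 0 ≤ φ →
        (∀ (c' : EuclideanSpace ℝ (Fin n) × ℝ) (r : ℝ), 1 ≤ r →
          ({m ∈ S | latticeCube m ⊆ ball2 c' r}.ncard : ℝ) ≤ φ * r ^ β) →
        ∀ (c' : EuclideanSpace ℝ (Fin n) × ℝ) (r : ℝ), 1 ≤ r →
          ({q : (Fin n → ℤ) × ℤ |
              (latticeCube q ∩
                ⋃ m ∈ S, ball2 (cubeCenterX m + θ (cubeCenterT m), cubeCenterT m) 4).Nonempty ∧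
              latticeCube q ⊆ ball2 c' r}.ncard : ℝ) ≤ c * φ * r ^ β :=
  statement8_general n
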